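/- arXiv:1601.02314 — 2 statements merged into one kernel-verified Lean document; each statement's English description precedes it below -/
import Mathlib

section
/- Let n ≥ 3 and p a prime. Any two nontrivial elements of the subgroup D of SL_n(Z/p) generated by {e_{1i}(1) : i = 2, ..., n} are conjugate in SL_n(Z/p). -/
open Matrix Finset

namespace Stmt1Aux

variable {n : ℕ} [NeZero n] {R : Type*} [CommRing R]

def N (v : Fin n → R) : Matrix (Fin n) (Fin n) R :=
  Matrix.of (fun i j => if i = 0 then v j else 0)

/-- `1` plus a matrix supported on row `0`. -/
def Ev (v : Fin n → R) : Matrix (Fin n) (Fin n) R := 1 + N v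

lemma Ev_apply (v : Fin n → R) (i j : Fin n) :
    Ev v i j = (if i = j then 1 else 0) + (if i = 0 then v j else 0) := by
  simp [Ev, N, Matrix.one_apply]

lemma Ev_zero : Ev (0 : Fin n → R) = 1 := by
  ext i j; simp [Ev, N]

lemma N_mul_N (v w : Fin n → R) (hv : v 0 = 0) : N v * N w = 0 := by
  ext i j
  by_cases hi : i = 0 <;>
    simp [N, Matrix.mul_apply, hi, Finset.sum_ite_eq', hv]

lemma N_add (v w : Fin n → R) : N v + N w = N (v + w) := by
  ext i j
  by_cases hi : i = 0 <;> simp [N, hi]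

lemma Ev_mul (v w : Fin n → R) (hv : v 0 = 0) :
    Ev v * Ev w = Ev (v + w) := by
  simp only [Ev, mul_add, add_mul, one_mul, mul_one, N_mul_N v w hv, add_zero, ← N_add]
  abel

lemma master (M : Matrix (Fin n) (Fin n) R) (v v' : Fin n → R)
    (h0 : ∀ i, M i 0 = if i = 0 then 1 else 0)
    (hrow : ∀ j, ∑ m, v' m * M m j = v j) :
    M * Ev v = Ev v' * M := by
  simp only [Ev, mul_add, add_mul, one_mul, mul_one]
  congr 1
  ext i j
  by_cases hi : i = 0 <;>
    simp [N, Matrix.mul_apply, hi, Finset.sum_ite_eq', h0, hrow]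

lemma det_one_updateRow (i : Fin n) (x : Fin n → R) :
    ((1 : Matrix (Fin n) (Fin n) R).updateRow i x).det = x i := by
  have hx : x = ∑ k, x k • (1 : Matrix (Fin n) (Fin n) R) k := by
    funext j
    simp [Matrix.one_apply, Finset.sum_ite_eq]
  calc ((1 : Matrix (Fin n) (Fin n) R).updateRow i x).det
      = ((1 : Matrix (Fin n) (Fin n) R).updateRow i
          (∑ k, x k • (1 : Matrix (Fin n) (Fin n) R) k)).det := by rw [← hx]
    _ = x i • (1 : Matrix (Fin n) (Fin n) R).det := Matrix.det_updateRow_sum _ i x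
    _ = x i := by simp

lemma Ev_eq_updateRow (v : Fin n → R) (hv : v 0 = 0) :
    Ev v = (1 : Matrix (Fin n) (Fin n) R).updateRow 0 (Pi.single 0 1 + v) := by
  ext i j
  by_cases hi : i = 0 <;>
    simp [Ev_apply, hi, Matrix.one_apply, Pi.single_apply, eq_comm]

lemma det_Ev (v : Fin n → R) (hv : v 0 = 0) : (Ev v).det = 1 := by
  rw [Ev_eq_updateRow v hv, det_one_updateRow]
  simp [hv]


section SL

variable {p : ℕ} [Fact p.Prime]


lemma mem_char (A : Matrix.SpecialLinearGroup (Fin n) (ZMod p))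
    (hA : A ∈ Subgroup.closure
      {C : Matrix.SpecialLinearGroup (Fin n) (ZMod p) | ∃ i : Fin n, i ≠ 0 ∧
          (C : Matrix (Fin n) (Fin n) (ZMod p)) = Matrix.transvection 0 i 1}) :
    ∃ v : Fin n → ZMod p, v 0 = 0 ∧ (A : Matrix (Fin n) (Fin n) (ZMod p)) = Ev v := by
  induction hA using Subgroup.closure_induction with
  | mem C hC =>
    obtain ⟨i, hi, hCi⟩ := hC
    refine ⟨Pi.single i 1, Pi.single_eq_of_ne (Ne.symm hi) 1, ?_⟩
    rw [hCi]
    ext x y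
    simp only [Matrix.transvection, Matrix.single, Matrix.add_apply,
      Matrix.one_apply, Matrix.of_apply, Ev_apply, Pi.single_apply]
    congr 1
    by_cases hx : 0 = x <;> by_cases hy : i = y <;>
      simp_all [eq_comm]
  | one => exact ⟨0, rfl, by simp [Ev_zero]⟩
  | mul x y hx hy ihx ihy =>
    obtain ⟨v, hv0, hv⟩ := ihx
    obtain ⟨w, hw0, hw⟩ := ihy
    exact ⟨v + w, by simp [hv0, hw0], by
      rw [Matrix.SpecialLinearGroup.coe_mul, hv, hw, Ev_mul v w hv0]⟩
  | inv x hx ihx =>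
    obtain ⟨v, hv0, hv⟩ := ihx
    refine ⟨-v, by simp [hv0], ?_⟩
    have h1 : Ev v * Ev (-v) = (1 : Matrix (Fin n) (Fin n) (ZMod p)) := by
      rw [Ev_mul v (-v) hv0]
      simp [Ev_zero]
    calc (↑(x⁻¹) : Matrix (Fin n) (Fin n) (ZMod p))
        = ↑(x⁻¹) * (↑x * Ev (-v)) := by rw [hv, h1, mul_one]
      _ = (↑(x⁻¹) * ↑x) * Ev (-v) := by rw [mul_assoc]
      _ = Ev (-v) := by
          rw [← Matrix.SpecialLinearGroup.coe_mul, inv_mul_cancel,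
            Matrix.SpecialLinearGroup.coe_one, one_mul]


/-- The target transvection as an element of `SL`. -/
def T (a : Fin n) (ha : a ≠ 0) : Matrix.SpecialLinearGroup (Fin n) (ZMod p) :=
  ⟨Ev (Pi.single a 1), by
    rw [det_Ev _ (Pi.single_eq_of_ne (Ne.symm ha) 1)]⟩

lemma conj_T (A : Matrix.SpecialLinearGroup (Fin n) (ZMod p))
    (v : Fin n → ZMod p) (a b : Fin n) (ha0 : a ≠ 0) (hb0 : b ≠ 0) (hab : a ≠ b)
    (hv0 : v 0 = 0) (hva : v a ≠ 0)
    (hA : (A : Matrix (Fin n) (Fin n) (ZMod p)) = Ev v) :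
    IsConj A (T a ha0) := by
  set h : Matrix (Fin n) (Fin n) (ZMod p) :=
    ((1 : Matrix (Fin n) (Fin n) (ZMod p)).updateRow a v).updateRow b
      ((v a)⁻¹ • (Pi.single b 1 : Fin n → ZMod p)) with hh
  have hb1 : ((1 : Matrix (Fin n) (Fin n) (ZMod p)).updateRow a v) b
      = Pi.single b (1 : ZMod p) := by
    rw [Matrix.updateRow_ne (Ne.symm hab)]
    funext j
    simp [Matrix.one_apply, Pi.single_apply, eq_comm]
  have deth : h.det = 1 := by
    rw [hh, Matrix.det_updateRow_smul, ← hb1, Matrix.updateRow_eq_self,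
      det_one_updateRow]
    exact inv_mul_cancel₀ hva
  have h0 : ∀ i, h i 0 = if i = 0 then 1 else 0 := by
    intro i
    by_cases hib : i = b
    · subst hib
      rw [hh, Matrix.updateRow_self]
      simp [Pi.single_eq_of_ne (Ne.symm hb0), hb0]
    · rw [hh, Matrix.updateRow_ne hib]
      by_cases hia : i = a
      · subst hia
        rw [Matrix.updateRow_self]
        simp [hv0, ha0]
      · rw [Matrix.updateRow_ne hia]
        simp [Matrix.one_apply]
  have hrow : ∀ j, ∑ m, (Pi.single a 1 : Fin n → ZMod p) m * h m j = v j := by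
    intro j
    rw [Finset.sum_eq_single a]
    · rw [Pi.single_eq_same, one_mul, hh, Matrix.updateRow_ne hab,
        Matrix.updateRow_self]
    · intro m _ hm
      rw [Pi.single_eq_of_ne hm, zero_mul]
    · intro habs; exact absurd (Finset.mem_univ a) habs
  have hmain : h * Ev v = Ev (Pi.single a 1) * h := master h v (Pi.single a 1) h0 hrow
  set H : Matrix.SpecialLinearGroup (Fin n) (ZMod p) := ⟨h, deth⟩ with hH
  have key : H * A = T a ha0 * H := by
    apply Subtype.ext
    show h * (A : Matrix (Fin n) (Fin n) (ZMod p))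
      = Ev (Pi.single a 1) * h
    rw [hA]
    exact hmain
  refine isConj_iff.2 ⟨H, ?_⟩
  rw [key, mul_inv_cancel_right]

lemma conj_T_of_ne_zero (A : Matrix.SpecialLinearGroup (Fin n) (ZMod p))
    (v : Fin n → ZMod p) (a b : Fin n) (ha0 : a ≠ 0) (hb0 : b ≠ 0) (hab : a ≠ b)
    (hv0 : v 0 = 0) (hv : v ≠ 0)
    (hA : (A : Matrix (Fin n) (Fin n) (ZMod p)) = Ev v) :
    IsConj A (T a ha0) := by
  obtain ⟨k, hk⟩ := Function.ne_iff.1 hv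
  simp only [Pi.zero_apply] at hk
  by_cases hva : v a ≠ 0
  · exact conj_T A v a b ha0 hb0 hab hv0 hva hA
  · push_neg at hva
    have hka : k ≠ a := fun h => hk (h ▸ hva)
    have hk0 : k ≠ 0 := fun h => hk (h ▸ hv0)
    set v' : Fin n → ZMod p := v + Pi.single a (v k) with hv'
    have hv'0 : v' 0 = 0 := by
      simp [hv', hv0, Pi.single_eq_of_ne (Ne.symm ha0)]
    have hv'a : v' a ≠ 0 := by
      simpa [hv', hva] using hk
    set t : Matrix (Fin n) (Fin n) (ZMod p) := Matrix.transvection k a (-1) with ht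
    have h0 : ∀ i, t i 0 = if i = 0 then 1 else 0 := by
      intro i
      simp [ht, Matrix.transvection, Matrix.single, Matrix.one_apply, ha0]
    have hrow : ∀ j, ∑ m, v' m * t m j = v j := by
      intro j
      have : ∀ m, v' m * t m j
          = (if m = j then v' m else 0) + (if m = k then (if a = j then -(v' k) else 0) else 0) := by
        intro m
        rcases eq_or_ne m k with rfl | hmk
        · simp only [ht, Matrix.transvection, Matrix.single, Matrix.add_apply,
            Matrix.one_apply, Matrix.of_apply, if_pos rfl, mul_add]
          rcases eq_or_ne a j with rfl | haj
          · simp [Ne.symm hka]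
          · simp [haj, fun h : j = a => haj h.symm]
        · simp [ht, Matrix.transvection, Matrix.single, Matrix.one_apply,
            Ne.symm hmk, hmk]
      rw [Finset.sum_congr rfl (fun m _ => this m)]
      rw [Finset.sum_add_distrib, Finset.sum_ite_eq', Finset.sum_ite_eq']
      simp only [Finset.mem_univ, if_true]
      have hv'k : v' k = v k := by
        simp [hv', Pi.single_eq_of_ne hka]
      rcases eq_or_ne a j with rfl | haj
      · simp [hv'k, hv', hva, Pi.single_eq_of_ne hka]
      · simp [haj, hv', Pi.single_eq_of_ne (fun h : j = a => haj h.symm)]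
    have hdet : t.det = 1 := Matrix.det_transvection_of_ne k a hka (-1)
    have hmain : t * Ev v = Ev v' * t := master t v v' h0 hrow
    set Tt : Matrix.SpecialLinearGroup (Fin n) (ZMod p) := ⟨t, hdet⟩ with hTt
    set A' : Matrix.SpecialLinearGroup (Fin n) (ZMod p) := ⟨Ev v', det_Ev v' hv'0⟩ with hA'
    have key : Tt * A = A' * Tt := by
      apply Subtype.ext
      show t * (A : Matrix (Fin n) (Fin n) (ZMod p)) = Ev v' * t
      rw [hA]
      exact hmain
    have h1 : IsConj A A' := isConj_iff.2 ⟨Tt, by rw [key, mul_inv_cancel_right]⟩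
    exact h1.trans (conj_T A' v' a b ha0 hb0 hab hv'0 hv'a rfl)

end SL
end Stmt1Aux


/-- Any two nontrivial elements of the subgroup `D` of `SL_n(ℤ/p)` generated by
`{e_{1i}(1) : i = 2, …, n}` are conjugate in `SL_n(ℤ/p)`, for `n ≥ 3` and `p` prime. -/
theorem stmt_1 (n : ℕ) [NeZero n] (hn : 3 ≤ n) (p : ℕ) [Fact p.Prime]
    (A B : Matrix.SpecialLinearGroup (Fin n) (ZMod p))
    (hA : A ∈ Subgroup.closure
      {C : Matrix.SpecialLinearGroup (Fin n) (ZMod p) |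
        ∃ i : Fin n, i ≠ 0 ∧
          (C : Matrix (Fin n) (Fin n) (ZMod p)) = Matrix.transvection 0 i 1})
    (hB : B ∈ Subgroup.closure
      {C : Matrix.SpecialLinearGroup (Fin n) (ZMod p) |
        ∃ i : Fin n, i ≠ 0 ∧
          (C : Matrix (Fin n) (Fin n) (ZMod p)) = Matrix.transvection 0 i 1})
    (hA1 : A ≠ 1) (hB1 : B ≠ 1) : IsConj A B := by
  obtain ⟨v, hv0, hAv⟩ := Stmt1Aux.mem_char A hA
  obtain ⟨w, hw0, hBw⟩ := Stmt1Aux.mem_char B hB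
  have hvne : v ≠ 0 := by
    intro h0
    apply hA1
    apply Subtype.ext
    show (A : Matrix (Fin n) (Fin n) (ZMod p)) = 1
    rw [hAv, h0, Stmt1Aux.Ev_zero]
  have hwne : w ≠ 0 := by
    intro h0
    apply hB1
    apply Subtype.ext
    show (B : Matrix (Fin n) (Fin n) (ZMod p)) = 1
    rw [hBw, h0, Stmt1Aux.Ev_zero]
  let a : Fin n := ⟨1, by omega⟩
  let b : Fin n := ⟨2, by omega⟩
  have ha0 : a ≠ 0 := by simp [a, Fin.ext_iff]
  have hb0 : b ≠ 0 := by simp [b, Fin.ext_iff]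
  have hab : a ≠ b := by simp [a, b, Fin.ext_iff]
  have h1 := Stmt1Aux.conj_T_of_ne_zero A v a b ha0 hb0 hab hv0 hvne hAv
  have h2 := Stmt1Aux.conj_T_of_ne_zero B w a b ha0 hb0 hab hw0 hwne hBw
  exact h1.trans h2.symm
end

section
/- For k ≥ 3, the group SL_k(Z/2) ⋉ (Z/2)^k (with the matrix multiplication action) is perfect, i.e., equal to its own commutator subgroup. -/
/-!
Every transvection `1 + c E_ij` is the commutator of `1 + c E_il` and `1 + E_lj` for a third
index `l`, and over `ℤ/2` the transvections generate `SL_k`, so `SL_k(ℤ/2)` is perfect for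
`k ≥ 3`. In the semidirect product `⁅A, v⁆ = Av - v`, and `1 + c E_ij` moves `e_j` by `c e_i`,
so the normal factor `(ℤ/2)^k` lies in the commutator subgroup as well.
-/

/-- The action of `SL_k(ℤ/2)` on `(ℤ/2)^k` by matrix multiplication, as a
homomorphism into the automorphism group of the (multiplicatively written)
elementary abelian group `(ℤ/2)^k`. -/
def slAction (k : ℕ) :
    Matrix.SpecialLinearGroup (Fin k) (ZMod 2) →*
      MulAut (Multiplicative (Fin k → ZMod 2)) where
  toFun A :=
    { toFun := fun v => Multiplicative.ofAdd ((A : Matrix (Fin k) (Fin k) (ZMod 2)).mulVec v.toAdd)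
      invFun := fun v =>
        Multiplicative.ofAdd (((A⁻¹ : Matrix.SpecialLinearGroup (Fin k) (ZMod 2)) :
          Matrix (Fin k) (Fin k) (ZMod 2)).mulVec v.toAdd)
      left_inv := by
        intro v
        simp [Matrix.mulVec_mulVec, Matrix.adjugate_mul, Matrix.SpecialLinearGroup.det_coe]
      right_inv := by
        intro v
        simp [Matrix.mulVec_mulVec, Matrix.mul_adjugate, Matrix.SpecialLinearGroup.det_coe]
      map_mul' := by
        intro v w
        simp [Matrix.mulVec_add, ← ofAdd_add] }
  map_one' := by
    ext v
    simp
  map_mul' := by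
    intro A B
    ext v
    simp [Matrix.mulVec_mulVec]

open scoped commutatorElement

namespace SemidirectProduct

variable {N G : Type*} [Group N] [Group G] {φ : G →* MulAut N}

theorem commutatorElement_inr_inl (g : G) (n : N) :
    ⁅(inr g : N ⋊[φ] G), (inl n : N ⋊[φ] G)⁆ = inl (φ g n * n⁻¹) := by
  rw [commutatorElement_def, map_mul, inl_aut, map_inv, map_inv]

theorem commutator_eq_top_of_closure (hG : commutator G = ⊤)
    (hN : Subgroup.closure (Set.range fun p : G × N ↦ φ p.1 p.2 * p.2⁻¹) = ⊤) :
    commutator (N ⋊[φ] G) = ⊤ := by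
  have hinr : (⊤ : Subgroup G).map inr ≤ commutator (N ⋊[φ] G) := by
    rw [← hG, commutator_def, Subgroup.map_commutator]
    exact Subgroup.commutator_mono le_top le_top
  have hinl : (⊤ : Subgroup N).map inl ≤ commutator (N ⋊[φ] G) := by
    rw [← hN, MonoidHom.map_closure, Subgroup.closure_le]
    rintro _ ⟨_, ⟨⟨g, n⟩, rfl⟩, rfl⟩
    rw [← commutatorElement_inr_inl]
    exact Subgroup.commutator_mem_commutator (Subgroup.mem_top _) (Subgroup.mem_top _)
  refine eq_top_iff.2 fun x _ ↦ ?_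
  rw [← inl_left_mul_inr_right x]
  exact mul_mem (hinl ⟨_, trivial, rfl⟩) (hinr ⟨_, trivial, rfl⟩)

end SemidirectProduct

theorem Fintype.exists_ne_ne_of_two_lt_card {ι : Type*} [Fintype ι] [DecidableEq ι]
    (h : 2 < Fintype.card ι) (i j : ι) : ∃ l, l ≠ i ∧ l ≠ j := by
  obtain ⟨l, hl⟩ : ({i, j}ᶜ : Finset ι).Nonempty := by
    rw [← Finset.card_pos, Finset.card_compl]
    have := Finset.card_le_two (a := i) (b := j)
    omega
  exact ⟨l, by simpa [not_or] using hl⟩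

namespace Matrix.SpecialLinearGroup

variable {ι F : Type*} [Fintype ι] [DecidableEq ι] [CommRing F]

theorem commutatorElement_transvection {i j l : ι} (hij : i ≠ j) (hil : i ≠ l) (hlj : l ≠ j)
    (c : F) : ⁅transvection hil c, transvection hlj 1⁆ = transvection hij c := by
  rw [commutatorElement_def, transvection_inv, transvection_inv]
  refine Subtype.ext ?_
  simp only [coe_mul, transvection_coe, add_mul, mul_add, one_mul, mul_one,
    single_mul_single_same, single_mul_single_of_ne _ _ _ _ hil.symm,
    single_mul_single_of_ne _ _ _ _ hlj.symm, single_mul_single_of_ne _ _ _ _ hij.symm,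
    add_zero, mul_neg, mul_one, neg_neg]
  simp only [← single_neg]
  abel

theorem transvection_mem_commutator_of_two_lt_card (h : 2 < Fintype.card ι) {i j : ι}
    (hij : i ≠ j) (c : F) : transvection hij c ∈ commutator (SpecialLinearGroup ι F) := by
  obtain ⟨l, hli, hlj⟩ := Fintype.exists_ne_ne_of_two_lt_card h i j
  rw [← commutatorElement_transvection hij hli.symm hlj c]
  exact Subgroup.commutator_mem_commutator (Subgroup.mem_top _) (Subgroup.mem_top _)

theorem diag2n_one {K : Type*} [Field K] {i j : ι} (hij : i ≠ j) :
    diag2n hij (1 : K) one_ne_zero = 1 := by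
  ext : 1
  simp [diag2n_coe]

theorem commutator_eq_top_of_two_lt_card_zmod_two (h : 2 < Fintype.card ι) :
    commutator (SpecialLinearGroup ι (ZMod 2)) = ⊤ := by
  have : Nontrivial ι := Fintype.one_lt_card_iff_nontrivial.1 (by omega)
  refine eq_top_iff.2 fun A _ ↦ diagonal_transvection_induction' (· ∈ commutator _) A
    (fun i j hij c hc ↦ ?_) (fun i j hij c ↦ transvection_mem_commutator_of_two_lt_card h hij c)
    fun _ _ ↦ mul_mem
  -- over `ℤ/2` the diagonal factors `diag(c, c⁻¹)` of the induction are trivial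
  obtain rfl : c = 1 := by revert c; decide
  rw [diag2n_one]
  exact one_mem _

end Matrix.SpecialLinearGroup

theorem slAction_apply {k : ℕ} (A : Matrix.SpecialLinearGroup (Fin k) (ZMod 2))
    (v : Multiplicative (Fin k → ZMod 2)) :
    slAction k A v = Multiplicative.ofAdd (A • v.toAdd) := rfl

theorem slAction_transvection_mul_inv {k : ℕ} {i j : Fin k} (hij : i ≠ j) (c : ZMod 2) :
    slAction k (Matrix.SpecialLinearGroup.transvection hij c) (.ofAdd (Pi.single j 1)) *
      (.ofAdd (Pi.single j 1))⁻¹ = .ofAdd (Pi.single i c) := by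
  rw [slAction_apply, toAdd_ofAdd, Matrix.SpecialLinearGroup.transvection_smul_single_snd,
    ← ofAdd_neg, ← ofAdd_add, add_neg_cancel_comm, ← Pi.single_smul', smul_eq_mul, mul_one]

theorem closure_range_slAction_mul_inv {k : ℕ} (hk : 1 < k) :
    Subgroup.closure (Set.range fun p : Matrix.SpecialLinearGroup (Fin k) (ZMod 2) ×
      Multiplicative (Fin k → ZMod 2) ↦ slAction k p.1 p.2 * p.2⁻¹) = ⊤ := by
  have : Nontrivial (Fin k) := Fin.nontrivial_iff_two_le.2 hk
  refine eq_top_iff.2 fun v _ ↦ ?_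
  have hv : v = ∏ i, .ofAdd (Pi.single i (v.toAdd i)) := by
    rw [← ofAdd_sum, Finset.univ_sum_single, ofAdd_toAdd]
  rw [hv]
  refine Subgroup.prod_mem _ fun i _ ↦ Subgroup.subset_closure ?_
  obtain ⟨j, hji⟩ := exists_ne i
  exact ⟨(Matrix.SpecialLinearGroup.transvection hji.symm (v.toAdd i), .ofAdd (Pi.single j 1)),
    slAction_transvection_mul_inv hji.symm _⟩

/-- For `k ≥ 3`, the semidirect product `SL_k(ℤ/2) ⋉ (ℤ/2)^k`
(matrix multiplication action) is perfect: it equals its own commutator subgroup. -/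
theorem stmt_5 (k : ℕ) (hk : 3 ≤ k) :
    commutator ((Multiplicative (Fin k → ZMod 2)) ⋊[slAction k] Matrix.SpecialLinearGroup (Fin k) (ZMod 2)) = ⊤ :=
  SemidirectProduct.commutator_eq_top_of_closure
    (Matrix.SpecialLinearGroup.commutator_eq_top_of_two_lt_card_zmod_two
      (by rw [Fintype.card_fin]; omega))
    (closure_range_slAction_mul_inv (by omega))
end
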